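/- arXiv:1206.2522 — 3 statements merged into one kernel-verified Lean document; each statement's English description precedes it below -/
import Mathlib

section
/- The Dunkl intertwining operator satisfies V_μ(e^x) = E_μ(x), i.e., (1/B(1/2, μ)) ∫_{−1}^{1} e^{xt}(1−t)^{μ−1}(1+t)^μ dt = Σ_{n≥0} x^n/[n]_μ!. -/
/-- The deformed integer `[n]_μ = n + μ (1 - (-1)^n)`. -/
noncomputable def dIdx (μ : ℝ) (n : ℕ) : ℝ := n + μ * (1 - (-1 : ℝ) ^ n)

/-- The deformed factorial `[n]_μ!`. -/
noncomputable def dFact (μ : ℝ) : ℕ → ℝ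
  | 0 => 1
  | n + 1 => dIdx μ (n + 1) * dFact μ n

/-- The Beta function `B(a,b) = Γ(a)Γ(b)/Γ(a+b)`. -/
noncomputable def betaFn (a b : ℝ) : ℝ := Real.Gamma a * Real.Gamma b / Real.Gamma (a + b)

/-!
Since `(1 - t)^(μ-1) (1 + t)^μ = (1 + t) (1 - t²)^(μ-1)`, expanding `e^{xt}` and integrating
termwise turns the left-hand side into `Σ xⁿ/n! (mₙ + mₙ₊₁) / B(1/2, μ)`, where
`m_k = ∫_{-1}^{1} t^k (1 - t²)^(μ-1) dt`. Odd moments vanish by symmetry, an integration by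
parts gives `(k + 1 + 2μ) m_{k+2} = (k + 1) m_k`, and `m₀ = B(1/2, μ)`; hence
`mₙ + mₙ₊₁ = B(1/2, μ) n! / [n]_μ!`.
-/

open intervalIntegral Set Nat
open MeasureTheory (volume ae_of_all)

theorem integral_rpow_mul_one_sub_rpow {a b : ℝ} (ha : 0 < a) (hb : 0 < b) :
    ∫ s in (0 : ℝ)..1, s ^ (a - 1) * (1 - s) ^ (b - 1) = ProbabilityTheory.beta a b := by
  rw [ProbabilityTheory.beta_eq_betaIntegralReal a b ha hb, Complex.betaIntegral,
    integral_congr (g := fun s : ℝ => ((s ^ (a - 1) * (1 - s) ^ (b - 1) : ℝ) : ℂ)),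
    integral_ofReal, Complex.ofReal_re]
  intro s hs
  rw [uIcc_of_le zero_le_one] at hs
  simp only [Complex.ofReal_mul, Complex.ofReal_cpow hs.1,
    Complex.ofReal_cpow (sub_nonneg.2 hs.2)]
  push_cast
  rfl

theorem hasSum_integral_exp_mul {g : ℝ → ℝ} {a b : ℝ} (hg : IntervalIntegrable g volume a b)
    (x : ℝ) :
    HasSum (fun n : ℕ => x ^ n / n ! * ∫ t in a..b, t ^ n * g t)
      (∫ t in a..b, Real.exp (x * t) * g t) := by
  have hexp (y : ℝ) : HasSum (fun n : ℕ => y ^ n / n !) (Real.exp y) := by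
    rw [Real.exp_eq_exp_ℝ]
    exact NormedSpace.expSeries_div_hasSum_exp y
  simp_rw [← integral_const_mul]
  refine hasSum_integral_of_dominated_convergence (fun n t => |x * t| ^ n / n ! * |g t|)
    (fun n => ?_) (fun n => ae_of_all _ fun t _ => ?_)
    (ae_of_all _ fun t _ => (hexp |x * t|).summable.mul_right _) ?_
    (ae_of_all _ fun t _ => ?_)
  · exact (Continuous.aestronglyMeasurable (by fun_prop)).mul
      ((continuous_pow n).aestronglyMeasurable.mul hg.def'.aestronglyMeasurable)
  · simp only [norm_mul, norm_div, norm_pow, Real.norm_eq_abs, Nat.abs_cast, abs_mul]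
    exact le_of_eq (by ring)
  · simp_rw [tsum_mul_right, (hexp _).tsum_eq]
    exact hg.norm.continuousOn_mul (by fun_prop)
  · simpa only [mul_pow, div_mul_eq_mul_div, mul_assoc, mul_div_assoc] using
      (hexp (x * t)).mul_right (g t)

section DeformedFactorial

variable {μ : ℝ}

theorem dIdx_two_mul (μ : ℝ) (j : ℕ) : dIdx μ (2 * j) = 2 * j := by
  simp [dIdx]

theorem dIdx_two_mul_add_one (μ : ℝ) (j : ℕ) : dIdx μ (2 * j + 1) = 2 * j + 1 + 2 * μ := by
  simp [dIdx, pow_succ]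
  ring

theorem dFact_two_mul_add_one (μ : ℝ) (j : ℕ) :
    dFact μ (2 * j + 1) = (2 * j + 1 + 2 * μ) * dFact μ (2 * j) := by
  rw [dFact, dIdx_two_mul_add_one]

theorem dFact_two_mul_add_two (μ : ℝ) (j : ℕ) :
    dFact μ (2 * j + 2) = (2 * j + 2) * dFact μ (2 * j + 1) := by
  rw [dFact, show 2 * j + 1 + 1 = 2 * (j + 1) by ring, dIdx_two_mul]
  push_cast
  ring

theorem dFact_pos (hμ : 0 ≤ μ) (n : ℕ) : 0 < dFact μ n := by
  induction n with
  | zero => exact one_pos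
  | succ n ih =>
    refine mul_pos ?_ ih
    rcases Nat.even_or_odd' (n + 1) with ⟨j, hj | hj⟩ <;> rw [hj]
    · have : 0 < j := by omega
      rw [dIdx_two_mul]
      positivity
    · rw [dIdx_two_mul_add_one]
      positivity

end DeformedFactorial

section WeightMoment

variable {μ : ℝ}

theorem intervalIntegrable_one_sub_sq_rpow (hμ : 0 < μ) :
    IntervalIntegrable (fun t : ℝ => (1 - t ^ 2) ^ (μ - 1)) volume (-1) 1 := by
  have hright : IntervalIntegrable (fun t : ℝ => (1 - t ^ 2) ^ (μ - 1)) volume 0 1 := by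
    have hsing : IntervalIntegrable (fun t : ℝ => (1 - t) ^ (μ - 1)) volume 0 1 := by
      simpa using ((intervalIntegrable_rpow' (a := 0) (b := 1) (r := μ - 1)
        (by linarith)).comp_sub_left 1).symm
    refine (hsing.mul_continuousOn (g := fun t : ℝ => (1 + t) ^ (μ - 1))
      (ContinuousOn.rpow_const (by fun_prop) fun t ht => Or.inl ?_)).congr fun t ht => ?_
    · rw [uIcc_of_le zero_le_one] at ht
      linarith [ht.1]
    · rw [uIoc_of_le zero_le_one] at ht
      rw [← Real.mul_rpow (by linarith [ht.2]) (by linarith [ht.1])]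
      ring_nf
  have hleft : IntervalIntegrable (fun t : ℝ => (1 - t ^ 2) ^ (μ - 1)) volume (-1) 0 := by
    simpa using ((IntervalIntegrable.iff_comp_neg).1 hright).symm
  exact hleft.trans hright

theorem intervalIntegrable_pow_mul_one_sub_sq_rpow (hμ : 0 < μ) (k : ℕ) :
    IntervalIntegrable (fun t : ℝ => t ^ k * (1 - t ^ 2) ^ (μ - 1)) volume (-1) 1 :=
  (intervalIntegrable_one_sub_sq_rpow hμ).continuousOn_mul (continuousOn_pow k)

noncomputable def weightMoment (μ : ℝ) (k : ℕ) : ℝ :=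
  ∫ t in (-1 : ℝ)..1, t ^ k * (1 - t ^ 2) ^ (μ - 1)

theorem weightMoment_of_odd {k : ℕ} (hk : Odd k) : weightMoment μ k = 0 := by
  have h := integral_comp_neg (a := -1) (b := 1) fun t : ℝ => t ^ k * (1 - t ^ 2) ^ (μ - 1)
  simp only [hk.neg_pow, neg_sq, neg_mul, intervalIntegral.integral_neg, neg_neg] at h
  rw [weightMoment]
  linarith

/-- Substituting `t = 2s - 1` gives `m₀ = 2^(2μ-1) B(μ, μ)`, which is `B(1/2, μ)` by
Legendre's duplication formula. -/
theorem weightMoment_zero (hμ : 0 < μ) : weightMoment μ 0 = betaFn (1 / 2) μ := by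
  have hbeta : ∫ s in (0 : ℝ)..1, (1 - (2 * s - 1) ^ 2) ^ (μ - 1) =
      4 ^ (μ - 1) * ProbabilityTheory.beta μ μ := by
    rw [← integral_rpow_mul_one_sub_rpow hμ hμ, ← integral_const_mul]
    refine integral_congr fun s hs => ?_
    rw [uIcc_of_le zero_le_one] at hs
    rw [← Real.mul_rpow hs.1 (sub_nonneg.2 hs.2), ← Real.mul_rpow zero_le_four
      (mul_nonneg hs.1 (sub_nonneg.2 hs.2))]
    ring_nf
  have hmoment : ∫ t in (-1 : ℝ)..1, (1 - t ^ 2) ^ (μ - 1) =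
      2 * 4 ^ (μ - 1) * ProbabilityTheory.beta μ μ := by
    have hsub := integral_comp_mul_sub (a := 0) (b := 1)
      (fun t : ℝ => (1 - t ^ 2) ^ (μ - 1)) two_ne_zero 1
    norm_num [hbeta] at hsub
    linarith
  have hpow : 2 * (4 : ℝ) ^ (μ - 1) * 2 ^ (1 - 2 * μ) = 1 := by
    rw [show (4 : ℝ) = 2 ^ (2 : ℝ) by norm_num, ← Real.rpow_mul zero_le_two, mul_assoc,
      ← Real.rpow_add two_pos, show 2 * (μ - 1) + (1 - 2 * μ) = -1 by ring, Real.rpow_neg_one]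
    norm_num
  have hdup := Real.Gamma_mul_Gamma_add_half μ
  have hG : 0 < Real.Gamma (2 * μ) := Real.Gamma_pos_of_pos (by linarith)
  have hG' : 0 < Real.Gamma (μ + 1 / 2) := Real.Gamma_pos_of_pos (by linarith)
  rw [weightMoment, betaFn, Real.Gamma_one_half_eq, add_comm (1 / 2)]
  simp only [pow_zero, one_mul]
  rw [hmoment, ProbabilityTheory.beta, show μ + μ = 2 * μ by ring, eq_div_iff hG'.ne']
  calc 2 * 4 ^ (μ - 1) * (Real.Gamma μ * Real.Gamma μ / Real.Gamma (2 * μ)) *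
        Real.Gamma (μ + 1 / 2)
      = 2 * 4 ^ (μ - 1) * Real.Gamma μ * (Real.Gamma μ * Real.Gamma (μ + 1 / 2)) /
          Real.Gamma (2 * μ) := by ring
    _ = √Real.pi * Real.Gamma μ := by
      rw [hdup]
      field_simp
      linear_combination hpow

/-- Integrate the derivative of `t^(k+1) (1 - t²)^μ`, which vanishes at `±1`. -/
theorem weightMoment_add_two (hμ : 0 < μ) (k : ℕ) :
    (k + 1 + 2 * μ) * weightMoment μ (k + 2) = (k + 1) * weightMoment μ k := by
  set F : ℝ → ℝ := fun t => t ^ (k + 1) * (1 - t ^ 2) ^ μ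
  have hF : ∀ t ∈ Ioo (-1 : ℝ) 1, HasDerivAt F
      ((k + 1) * (t ^ k * (1 - t ^ 2) ^ (μ - 1)) -
        (k + 1 + 2 * μ) * (t ^ (k + 2) * (1 - t ^ 2) ^ (μ - 1))) t := by
    intro t ht
    have hpos : 0 < 1 - t ^ 2 := by nlinarith [ht.1, ht.2]
    refine ((hasDerivAt_pow (k + 1) t).mul (((hasDerivAt_pow 2 t).const_sub 1).rpow_const
      (p := μ) (Or.inl hpos.ne'))).congr_deriv ?_
    rw [Real.rpow_sub_one hpos.ne']
    field_simp
    push_cast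
    ring
  have hint_k := intervalIntegrable_pow_mul_one_sub_sq_rpow hμ k
  have hint_k2 := intervalIntegrable_pow_mul_one_sub_sq_rpow hμ (k + 2)
  have hFTC := integral_eq_sub_of_hasDerivAt_of_le (neg_one_lt_zero.trans one_pos).le
    (by fun_prop (disch := positivity)) hF ((hint_k.const_mul _).sub (hint_k2.const_mul _))
  rw [integral_sub (hint_k.const_mul _) (hint_k2.const_mul _),
    integral_const_mul, integral_const_mul] at hFTC
  have hF_one : F 1 = 0 := by simp [F, Real.zero_rpow hμ.ne']
  have hF_neg_one : F (-1) = 0 := by simp [F, Real.zero_rpow hμ.ne']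
  rw [hF_one, hF_neg_one, sub_zero] at hFTC
  rw [weightMoment, weightMoment]
  linarith

theorem weightMoment_two_mul (hμ : 0 < μ) (j : ℕ) :
    weightMoment μ (2 * j) = betaFn (1 / 2) μ * (2 * j)! / dFact μ (2 * j) := by
  induction j with
  | zero => simp [weightMoment_zero hμ, dFact]
  | succ j ih =>
    have hrec := weightMoment_add_two hμ (2 * j)
    rw [ih] at hrec
    rw [mul_add_one, dFact_two_mul_add_two, dFact_two_mul_add_one, factorial_succ,
      factorial_succ]
    have hD := dFact_pos hμ.le (2 * j)
    field_simp at hrec ⊢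
    push_cast at hrec ⊢
    linear_combination (2 * (j : ℝ) + 2) * hrec

theorem weightMoment_add_weightMoment_succ (hμ : 0 < μ) (n : ℕ) :
    weightMoment μ n + weightMoment μ (n + 1) = betaFn (1 / 2) μ * n ! / dFact μ n := by
  rcases Nat.even_or_odd' n with ⟨j, rfl | rfl⟩
  · rw [weightMoment_of_odd (odd_two_mul_add_one j), add_zero, weightMoment_two_mul hμ]
  · have heven := weightMoment_two_mul hμ (j + 1)
    rw [mul_add_one, dFact_two_mul_add_two, factorial_succ] at heven
    rw [weightMoment_of_odd (odd_two_mul_add_one j), zero_add, heven]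
    have hD := dFact_pos hμ.le (2 * j + 1)
    field_simp
    push_cast
    ring

theorem integral_pow_mul_one_add_mul_one_sub_sq_rpow (hμ : 0 < μ) (n : ℕ) :
    ∫ t in (-1 : ℝ)..1, t ^ n * ((1 + t) * (1 - t ^ 2) ^ (μ - 1)) =
      betaFn (1 / 2) μ * n ! / dFact μ n := by
  rw [← weightMoment_add_weightMoment_succ hμ, weightMoment, weightMoment, ← integral_add
    (intervalIntegrable_pow_mul_one_sub_sq_rpow hμ n)
    (intervalIntegrable_pow_mul_one_sub_sq_rpow hμ (n + 1))]
  congr 1 with t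
  ring

theorem one_sub_rpow_mul_one_add_rpow (hμ : μ ≠ 0) {t : ℝ} (ht : t ∈ Icc (-1 : ℝ) 1) :
    (1 - t) ^ (μ - 1) * (1 + t) ^ μ = (1 + t) * (1 - t ^ 2) ^ (μ - 1) := by
  have h₁ : 0 ≤ 1 - t := by linarith [ht.2]
  have h₂ : 0 ≤ 1 + t := by linarith [ht.1]
  have hsucc := Real.rpow_add_one' h₂ (y := μ - 1) (by simpa using hμ)
  rw [sub_add_cancel] at hsucc
  rw [hsucc, show 1 - t ^ 2 = (1 - t) * (1 + t) by ring, Real.mul_rpow h₁ h₂]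
  ring

end WeightMoment

/-- `V_μ(e^x) = E_μ(x)`. -/
theorem Vmu_exp (μ : ℝ) (hμ : 0 < μ) (x : ℝ) :
    (1 / betaFn (1 / 2) μ) *
        ∫ t in (-1 : ℝ)..1, Real.exp (x * t) * (1 - t) ^ (μ - 1) * (1 + t) ^ μ =
      ∑' n : ℕ, x ^ n / dFact μ n := by
  have hB : betaFn (1 / 2) μ ≠ 0 := (ProbabilityTheory.beta_pos one_half_pos hμ).ne'
  have hintegrand : EqOn (fun t => Real.exp (x * t) * (1 - t) ^ (μ - 1) * (1 + t) ^ μ)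
      (fun t => Real.exp (x * t) * ((1 + t) * (1 - t ^ 2) ^ (μ - 1))) (uIcc (-1) 1) := by
    intro t ht
    rw [uIcc_of_le (by norm_num)] at ht
    simp only [mul_assoc, one_sub_rpow_mul_one_add_rpow hμ.ne' ht]
  have hweight : IntervalIntegrable (fun t : ℝ => (1 + t) * (1 - t ^ 2) ^ (μ - 1))
      volume (-1) 1 :=
    (intervalIntegrable_one_sub_sq_rpow hμ).continuousOn_mul (by fun_prop)
  have hterm (n : ℕ) :
      x ^ n / n ! * ∫ t in (-1 : ℝ)..1, t ^ n * ((1 + t) * (1 - t ^ 2) ^ (μ - 1)) =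
        betaFn (1 / 2) μ * (x ^ n / dFact μ n) := by
    rw [integral_pow_mul_one_add_mul_one_sub_sq_rpow hμ]
    field_simp
  have hsum := hasSum_integral_exp_mul hweight x
  simp only [hterm] at hsum
  rw [integral_congr hintegrand, ← hsum.tsum_eq, tsum_mul_left, ← mul_assoc,
    one_div_mul_cancel hB, one_mul]
end

section
/- The intertwining operator V_μ intertwines d/dx with the Dunkl operator on polynomials: D_μ ∘ V_μ = V_μ ∘ d/dx, where V_μ(f)(x) = (1/B(1/2,μ)) ∫_{−1}^1 f(xt)(1−t)^{μ−1}(1+t)^μ dt. -/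
/-- The Dunkl operator `D_μ f(x) = f'(x) + μ (f(x) - f(-x))/x`. -/
noncomputable def dunkl (μ : ℝ) (f : ℝ → ℝ) (x : ℝ) : ℝ :=
  deriv f x + μ * (f x - f (-x)) / x

/-- The Dunkl intertwining operator. -/
noncomputable def Vmu (μ : ℝ) (f : ℝ → ℝ) (x : ℝ) : ℝ :=
  (1 / betaFn (1 / 2) μ) * ∫ t in (-1 : ℝ)..1, f (x * t) * (1 - t) ^ (μ - 1) * (1 + t) ^ μ

/-
V_μ sends x^n to m_n x^n / B(1/2, μ), where m_n is the n-th moment of the weight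
(1 - t)^(μ-1) (1 + t)^μ on [-1, 1], while D_μ sends x^n to (n + μ(1 - (-1)^n)) x^(n-1).
Comparing coefficients, the identity is the moment recursion
(k + 1 + μ(1 - (-1)^(k+1))) m_(k+1) = (k + 1) m_k.
Writing 1 + t as a sum gives m_n = J_n + J_(n+1), with J_k the moments of the even weight
(1 - t²)^(μ-1): the odd J_k vanish, and integrating the derivative of t^(k+1) (1 - t²)^μ,
which vanishes at ±1, gives (k + 1) J_k = (k + 1 + 2μ) J_(k+2).
-/

open MeasureTheory Set Polynomial

theorem dunkl_const_mul (μ c : ℝ) (f : ℝ → ℝ) (x : ℝ) :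
    dunkl μ (fun y => c * f y) x = c * dunkl μ f x := by
  simp only [dunkl, deriv_const_mul_field']
  ring

theorem dunkl_sum {ι : Type*} (μ : ℝ) (s : Finset ι) (f : ι → ℝ → ℝ) {x : ℝ}
    (hf : ∀ i ∈ s, DifferentiableAt ℝ (f i) x) :
    dunkl μ (fun y => ∑ i ∈ s, f i y) x = ∑ i ∈ s, dunkl μ (f i) x := by
  simp only [dunkl, deriv_fun_sum hf, Finset.sum_add_distrib, ← Finset.sum_div,
    ← Finset.mul_sum, Finset.sum_sub_distrib]

theorem dunkl_pow (μ : ℝ) (n : ℕ) {x : ℝ} (hx : x ≠ 0) :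
    dunkl μ (fun y => y ^ n) x = (n + μ * (1 - (-1) ^ n)) * x ^ (n - 1) := by
  rcases n with _ | n
  · simp [dunkl]
  · rw [dunkl, deriv_pow_field, neg_pow, pow_succ' x n]
    push_cast
    field_simp

section Moments

open intervalIntegral

theorem intervalIntegrable_mul_one_sub_rpow_mul_one_add_rpow {a b : ℝ} (ha : -1 < a)
    (hb : -1 < b) {g : ℝ → ℝ} (hg : Continuous g) :
    IntervalIntegrable (fun t => g t * (1 - t) ^ a * (1 + t) ^ b) volume (-1) 1 := by
  have hleft : IntervalIntegrable (fun t => g t * (1 - t) ^ a * (1 + t) ^ b) volume (-1) 0 := by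
    have hb' : IntervalIntegrable (fun t : ℝ => (1 + t) ^ b) volume (-1) 0 := by
      simpa using (intervalIntegrable_rpow' hb (a := 0) (b := 1)).comp_add_left 1
    refine hb'.continuousOn_mul (hg.continuousOn.mul
      ((continuous_sub_left 1).continuousOn.rpow_const fun t ht => Or.inl ?_))
    rw [uIcc_of_le (by norm_num)] at ht
    linarith [ht.2]
  have hright : IntervalIntegrable (fun t => g t * (1 + t) ^ b * (1 - t) ^ a) volume 0 1 := by
    have ha' : IntervalIntegrable (fun t : ℝ => (1 - t) ^ a) volume 0 1 := by
      simpa using ((intervalIntegrable_rpow' ha (a := 0) (b := 1)).comp_sub_left 1).symm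
    refine ha'.continuousOn_mul (hg.continuousOn.mul
      ((continuous_const_add 1).continuousOn.rpow_const fun t ht => Or.inl ?_))
    rw [uIcc_of_le (by norm_num)] at ht
    linarith [ht.1]
  exact hleft.trans (hright.congr fun t _ => by ring)

noncomputable def symmMoment (μ : ℝ) (k : ℕ) : ℝ :=
  ∫ t in (-1 : ℝ)..1, t ^ k * ((1 - t) * (1 + t)) ^ (μ - 1)

noncomputable def dunklMoment (μ : ℝ) (n : ℕ) : ℝ :=
  ∫ t in (-1 : ℝ)..1, t ^ n * (1 - t) ^ (μ - 1) * (1 + t) ^ μ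

theorem intervalIntegrable_pow_mul_rpow {e : ℝ} (he : -1 < e) (k : ℕ) :
    IntervalIntegrable (fun t => t ^ k * ((1 - t) * (1 + t)) ^ e) volume (-1) 1 := by
  refine (intervalIntegrable_mul_one_sub_rpow_mul_one_add_rpow he he
    (continuous_pow k)).congr fun t ht => ?_
  rw [uIoc_of_le (by norm_num)] at ht
  rw [Real.mul_rpow (by linarith [ht.2]) (by linarith [ht.1]), mul_assoc]

theorem symmMoment_of_odd (μ : ℝ) {k : ℕ} (hk : Odd k) : symmMoment μ k = 0 := by
  have hodd : ∀ t : ℝ, (-t) ^ k * ((1 - -t) * (1 + -t)) ^ (μ - 1)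
      = -(t ^ k * ((1 - t) * (1 + t)) ^ (μ - 1)) := fun t => by
    rw [hk.neg_pow, neg_mul, sub_neg_eq_add, ← sub_eq_add_neg, mul_comm (1 + t)]
  have h := integral_comp_neg (a := (-1 : ℝ)) (b := 1)
    (fun t => t ^ k * ((1 - t) * (1 + t)) ^ (μ - 1))
  simp only [hodd, intervalIntegral.integral_neg, neg_neg] at h
  rw [symmMoment]
  linarith

theorem dunklMoment_eq_add {μ : ℝ} (hμ : 0 < μ) (n : ℕ) :
    dunklMoment μ n = symmMoment μ n + symmMoment μ (n + 1) := by
  rw [symmMoment, symmMoment, ← integral_add (intervalIntegrable_pow_mul_rpow (by linarith) n)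
    (intervalIntegrable_pow_mul_rpow (by linarith) (n + 1))]
  refine integral_congr fun t ht => ?_
  rw [uIcc_of_le (by norm_num)] at ht
  have h1 : 0 ≤ 1 + t := by linarith [ht.1]
  have hpow : (1 + t) ^ μ = (1 + t) ^ (μ - 1) * (1 + t) := by
    rw [← Real.rpow_add_one' h1 (by linarith), sub_add_cancel]
  rw [Real.mul_rpow (by linarith [ht.2]) h1, hpow]
  ring

theorem mul_rpow_sub_one_eq_rpow {u : ℝ} (hu : 0 < u) (μ : ℝ) : u * u ^ (μ - 1) = u ^ μ := by
  rw [Real.rpow_sub_one hu.ne']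
  field_simp

theorem hasDerivAt_pow_mul_rpow {μ : ℝ} (k : ℕ) {t : ℝ} (ht : t ∈ Ioo (-1 : ℝ) 1) :
    HasDerivAt (fun t => t ^ (k + 1) * ((1 - t) * (1 + t)) ^ μ)
      ((k + 1) * (t ^ k * ((1 - t) * (1 + t)) ^ (μ - 1))
        - (k + 1 + 2 * μ) * (t ^ (k + 2) * ((1 - t) * (1 + t)) ^ (μ - 1))) t := by
  have hpos : 0 < (1 - t) * (1 + t) := mul_pos (by linarith [ht.2]) (by linarith [ht.1])
  have hquad : HasDerivAt (fun t : ℝ => (1 - t) * (1 + t)) (-2 * t) t :=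
    (((hasDerivAt_id t).const_sub 1).mul ((hasDerivAt_id t).const_add 1)).congr_deriv
      (by simp only [id_eq]; ring)
  refine ((hasDerivAt_pow (k + 1) t).mul
    ((Real.hasDerivAt_rpow_const (p := μ) (Or.inl hpos.ne')).comp t hquad)).congr_deriv ?_
  simp only [Function.comp_apply, Nat.add_sub_cancel]
  rw [← mul_rpow_sub_one_eq_rpow hpos]
  push_cast
  ring

theorem symmMoment_rec {μ : ℝ} (hμ : 0 < μ) (k : ℕ) :
    (k + 1) * symmMoment μ k = (k + 1 + 2 * μ) * symmMoment μ (k + 2) := by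
  have hint := fun j => intervalIntegrable_pow_mul_rpow (by linarith : -1 < μ - 1) j
  have hftc := integral_eq_sub_of_hasDeriv_right_of_le (by norm_num)
    ((continuous_pow (k + 1)).mul ((Real.continuous_rpow_const hμ.le).comp
      (by fun_prop : Continuous fun t : ℝ => (1 - t) * (1 + t)))).continuousOn
    (fun t ht => (hasDerivAt_pow_mul_rpow k ht).hasDerivWithinAt)
    (((hint k).const_mul _).sub ((hint (k + 2)).const_mul _))
  rw [integral_sub ((hint k).const_mul _) ((hint (k + 2)).const_mul _),
    intervalIntegral.integral_const_mul, intervalIntegral.integral_const_mul] at hftc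
  simp only [Pi.mul_apply, one_pow, Function.comp_apply, sub_self, zero_mul,
    Real.zero_rpow hμ.ne', mul_zero, sub_neg_eq_add, add_neg_cancel] at hftc
  rw [symmMoment, symmMoment]
  linarith

theorem dunklMoment_rec {μ : ℝ} (hμ : 0 < μ) (k : ℕ) :
    (k + 1 + μ * (1 - (-1) ^ (k + 1))) * dunklMoment μ (k + 1) = (k + 1) * dunklMoment μ k := by
  rw [dunklMoment_eq_add hμ, dunklMoment_eq_add hμ]
  rcases Nat.even_or_odd k with hk | hk
  · rw [symmMoment_of_odd μ hk.add_one, hk.add_one.neg_one_pow]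
    linear_combination -(symmMoment_rec hμ k)
  · rw [symmMoment_of_odd μ hk, symmMoment_of_odd μ (hk.add_one.add_one), hk.add_one.neg_one_pow]
    ring

theorem integral_eval_mul_weight {μ : ℝ} (hμ : 0 < μ) (q : ℝ[X]) {N : ℕ} (hN : q.natDegree < N)
    (y : ℝ) :
    ∫ t in (-1 : ℝ)..1, q.eval (y * t) * (1 - t) ^ (μ - 1) * (1 + t) ^ μ
      = ∑ n ∈ Finset.range N, q.coeff n * dunklMoment μ n * y ^ n := by
  have hexpand : ∀ t, q.eval (y * t) * (1 - t) ^ (μ - 1) * (1 + t) ^ μ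
      = ∑ n ∈ Finset.range N, q.coeff n * y ^ n * (t ^ n * (1 - t) ^ (μ - 1) * (1 + t) ^ μ) :=
    fun t => by
      rw [eval_eq_sum_range' hN, Finset.sum_mul, Finset.sum_mul]
      exact Finset.sum_congr rfl fun n _ => by ring
  simp only [hexpand]
  rw [intervalIntegral.integral_finsetSum fun n _ =>
    (intervalIntegrable_mul_one_sub_rpow_mul_one_add_rpow (by linarith) (by linarith)
      (continuous_pow n)).const_mul (q.coeff n * y ^ n)]
  refine Finset.sum_congr rfl fun n _ => ?_
  rw [intervalIntegral.integral_const_mul, dunklMoment]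
  ring

end Moments

theorem Vmu_eval {μ : ℝ} (hμ : 0 < μ) (q : ℝ[X]) {N : ℕ} (hN : q.natDegree < N) :
    Vmu μ (fun y => q.eval y)
      = fun y =>
        1 / betaFn (1 / 2) μ * ∑ n ∈ Finset.range N, q.coeff n * dunklMoment μ n * y ^ n := by
  ext y
  rw [Vmu, integral_eval_mul_weight hμ q hN]

/-- `D_μ ∘ V_μ = V_μ ∘ d/dx` on polynomial functions. -/
theorem dunkl_Vmu_intertwine (μ : ℝ) (hμ : 0 < μ) (p : Polynomial ℝ) (x : ℝ) (hx : x ≠ 0) :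
    dunkl μ (Vmu μ fun y => p.eval y) x = Vmu μ (fun y => (Polynomial.derivative p).eval y) x := by
  have hN : p.natDegree < p.natDegree + 2 := by omega
  have hN' : (derivative p).natDegree < p.natDegree + 1 :=
    (natDegree_derivative_le p).trans_lt (by omega)
  rw [Vmu_eval hμ p hN, Vmu_eval hμ _ hN', dunkl_const_mul,
    dunkl_sum μ _ _ fun n _ => (differentiableAt_pow n).const_mul _]
  simp only [dunkl_const_mul, dunkl_pow μ _ hx]
  rw [Finset.sum_range_succ' _ (p.natDegree + 1)]
  congr 1
  simp only [Nat.cast_add, Nat.cast_one, add_tsub_cancel_right, CharP.cast_eq_zero, pow_zero,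
    sub_self, mul_zero, add_zero, zero_tsub, mul_one]
  refine Finset.sum_congr rfl fun n _ => ?_
  rw [coeff_derivative]
  linear_combination (p.coeff (n + 1) * x ^ n) * dunklMoment_rec hμ n
end

section
/- The generalized translation satisfies τ_y E_μ(λx) = E_μ(λx) E_μ(λy) for λ ∈ ℂ, where τ_y f = Σ_{n≥0} (y^n/[n]_μ!) D_μ^n f. -/
/-- The Dunkl operator on complex-valued functions of a real variable. -/
noncomputable def dunklC (μ : ℝ) (f : ℝ → ℂ) (x : ℝ) : ℂ :=
  deriv f x + (μ : ℂ) * (f x - f (-x)) / (x : ℂ)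

/-- The deformed exponential `E_μ(z) = Σ_{n≥0} z^n / [n]_μ!`. -/
noncomputable def Emu (μ : ℝ) (z : ℂ) : ℂ := ∑' n : ℕ, z ^ n / (dFact μ n : ℂ)

/-- The generalized translation `τ_y f = Σ_{n≥0} (y^n/[n]_μ!) D_μ^n f`. -/
noncomputable def tauC (μ : ℝ) (y : ℝ) (f : ℝ → ℂ) (x : ℝ) : ℂ :=
  ∑' n : ℕ, ((y : ℂ) ^ n / (dFact μ n : ℂ)) * ((dunklC μ)^[n] f x)

/-! For `μ ≥ 0` we have `[n]_μ! ≥ n!`, so `E_μ` is an entire power series that may be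
differentiated termwise. Since `D_μ x^n = [n]_μ x^(n-1)` and `[n]_μ / [n]_μ! = 1 / [n-1]_μ!`,
`E_μ(λ·)` is an eigenfunction of `D_μ` with eigenvalue `λ` on `x ≠ 0`. As `D_μ f x` only
depends on `f` near `x` and at `-x`, this iterates to `D_μ^n E_μ(λ·) = λ^n E_μ(λ·)` there, and
the series defining `τ_y` becomes `E_μ(λx) Σ (λy)^n / [n]_μ! = E_μ(λx) E_μ(λy)`. -/

open Nat Filter Topology

section DeformedFactorial

variable {μ : ℝ}

lemma natCast_le_dIdx (hμ : 0 ≤ μ) (n : ℕ) : (n : ℝ) ≤ dIdx μ n := by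
  have : 0 ≤ 1 - (-1 : ℝ) ^ n := by
    rcases n.even_or_odd with h | h <;> simp [h.neg_one_pow]
  exact le_add_of_nonneg_right (mul_nonneg hμ this)

lemma factorial_le_dFact (hμ : 0 ≤ μ) : ∀ n : ℕ, (n ! : ℝ) ≤ dFact μ n
  | 0 => by simp [dFact]
  | n + 1 => by
    rw [Nat.factorial_succ, Nat.cast_mul, dFact]
    exact mul_le_mul (natCast_le_dIdx hμ _) (factorial_le_dFact hμ n) (by positivity)
      ((natCast_le_dIdx hμ _).trans' (by positivity))

end DeformedFactorial

section FactorialDominatedSeries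

variable {d : ℕ → ℝ}

lemma norm_div_le_div_factorial (hd : ∀ n, (n ! : ℝ) ≤ d n) (a : ℂ) (n : ℕ) :
    ‖a / (d n : ℂ)‖ ≤ ‖a‖ / n ! := by
  have hpos : (0 : ℝ) < n ! := by positivity
  rw [norm_div, Complex.norm_real, Real.norm_of_nonneg (hpos.le.trans (hd n))]
  exact div_le_div_of_nonneg_left (norm_nonneg a) hpos (hd n)

lemma summable_pow_div (hd : ∀ n, (n ! : ℝ) ≤ d n) (z : ℂ) :
    Summable fun n => z ^ n / (d n : ℂ) :=
  .of_norm_bounded (Real.summable_pow_div_factorial ‖z‖) fun n =>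
    (norm_div_le_div_factorial hd _ n).trans_eq (by rw [norm_pow])

lemma norm_natCast_mul_pow_pred_div_le (hd : ∀ n, (n ! : ℝ) ≤ d n) {R : ℝ} (hR : 1 ≤ R) {w : ℂ}
    (hw : ‖w‖ ≤ R) (n : ℕ) :
    ‖n * w ^ (n - 1) / (d n : ℂ)‖ ≤ (2 * R) ^ n / n ! := by
  refine (norm_div_le_div_factorial hd _ n).trans (div_le_div_of_nonneg_right ?_ (by positivity))
  calc ‖(n : ℂ) * w ^ (n - 1)‖ = n * ‖w‖ ^ (n - 1) := by simp
    _ ≤ 2 ^ n * R ^ n := by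
      gcongr
      · exact_mod_cast n.lt_two_pow_self.le
      · exact (pow_le_pow_left₀ (norm_nonneg w) hw _).trans (pow_le_pow_right₀ hR (n.sub_le 1))
    _ = (2 * R) ^ n := (mul_pow 2 R n).symm

lemma summable_natCast_mul_pow_pred_div (hd : ∀ n, (n ! : ℝ) ≤ d n) (z : ℂ) :
    Summable fun n => n * z ^ (n - 1) / (d n : ℂ) :=
  .of_norm_bounded (Real.summable_pow_div_factorial _)
    (norm_natCast_mul_pow_pred_div_le hd (le_add_of_nonneg_left (norm_nonneg z))
      (le_add_of_nonneg_right zero_le_one))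

lemma hasDerivAt_tsum_pow_div (hd : ∀ n, (n ! : ℝ) ≤ d n) (z : ℂ) :
    HasDerivAt (fun w => ∑' n, w ^ n / (d n : ℂ)) (∑' n, n * z ^ (n - 1) / (d n : ℂ)) z := by
  have hR : 1 ≤ ‖z‖ + 1 := le_add_of_nonneg_left (norm_nonneg z)
  have hz : z ∈ Metric.ball (0 : ℂ) (‖z‖ + 1) := by simp
  exact hasDerivAt_tsum_of_isPreconnected (g' := fun n w => n * w ^ (n - 1) / (d n : ℂ))
    (Real.summable_pow_div_factorial (2 * (‖z‖ + 1)))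
    Metric.isOpen_ball (convex_ball 0 _).isPreconnected
    (fun n w _ => (hasDerivAt_pow n w).div_const _)
    (fun n w hw => norm_natCast_mul_pow_pred_div_le hd hR (mem_ball_zero_iff.1 hw).le n)
    hz (summable_pow_div hd z) hz

end FactorialDominatedSeries

section Dunkl

variable {μ : ℝ}

lemma dunklC_iterate_apply_of_eigen {f : ℝ → ℂ} {c : ℂ} (hf : ∀ x ≠ 0, dunklC μ f x = c * f x)
    (n : ℕ) {x : ℝ} (hx : x ≠ 0) : (dunklC μ)^[n] f x = c ^ n * f x := by
  induction n generalizing x with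
  | zero => simp
  | succ n ih =>
    have hloc : (dunklC μ)^[n] f =ᶠ[𝓝 x] fun t => c ^ n * f t :=
      (eventually_ne_nhds hx).mono fun t ht => ih ht
    calc (dunklC μ)^[n + 1] f x = dunklC μ (fun t => c ^ n * f t) x := by
          rw [Function.iterate_succ_apply']
          simp only [dunklC, hloc.deriv_eq, ih hx, ih (neg_ne_zero.2 hx)]
      _ = c ^ n * dunklC μ f x := by
          simp only [dunklC, deriv_const_mul_field']
          ring
      _ = c ^ (n + 1) * f x := by rw [hf x hx]; ring

-- The left side is `D_μ (t ↦ (λt)^n) x`.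
lemma dunkl_pow_identity (lam x : ℂ) (hx : x ≠ 0) (n : ℕ) :
    lam * (n * (lam * x) ^ (n - 1)) + μ / x * ((lam * x) ^ n - (lam * -x) ^ n)
      = lam * (dIdx μ n * (lam * x) ^ (n - 1)) := by
  rcases n with _ | n
  · simp [dIdx]
  · simp only [dIdx, add_tsub_cancel_right, mul_neg, neg_pow (lam * x), pow_succ]
    push_cast
    field_simp

lemma hasSum_Emu (hμ : 0 ≤ μ) (z : ℂ) :
    HasSum (fun n => z ^ n / (dFact μ n : ℂ)) (Emu μ z) :=
  (summable_pow_div (factorial_le_dFact hμ) z).hasSum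

lemma hasSum_dIdx_mul_pow_pred_div_dFact (hμ : 0 ≤ μ) (z : ℂ) :
    HasSum (fun n => dIdx μ n * z ^ (n - 1) / (dFact μ n : ℂ)) (Emu μ z) := by
  rw [← hasSum_nat_add_iff' 1]
  have hI (n : ℕ) : (dIdx μ (n + 1) : ℂ) ≠ 0 := by
    have := natCast_le_dIdx hμ (n + 1)
    exact_mod_cast (lt_of_lt_of_le (by positivity) this).ne'
  have h0 : ∑ i ∈ Finset.range 1, (dIdx μ i : ℂ) * z ^ (i - 1) / (dFact μ i : ℂ) = 0 := by
    simp [dIdx]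
  rw [h0, sub_zero]
  refine (hasSum_Emu hμ z).congr_fun fun n => ?_
  rw [dFact, add_tsub_cancel_right]
  push_cast
  field_simp [hI n]

lemma dunklC_Emu_comp_mul (hμ : 0 ≤ μ) (lam : ℂ) {x : ℝ} (hx : x ≠ 0) :
    dunklC μ (fun t => Emu μ (lam * t)) x = lam * Emu μ (lam * x) := by
  have hd := factorial_le_dFact hμ
  have hderiv : HasDerivAt (fun t : ℝ => Emu μ (lam * t))
      (lam * ∑' n, n * (lam * x) ^ (n - 1) / (dFact μ n : ℂ)) x := by
    have hE : HasDerivAt (Emu μ) (∑' n, n * (lam * x) ^ (n - 1) / (dFact μ n : ℂ)) (lam * x) :=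
      hasDerivAt_tsum_pow_div hd _
    exact ((hE.comp (x : ℂ) ((hasDerivAt_id _).const_mul lam)).comp_ofReal).congr_deriv
      (by ring)
  have hx' : (x : ℂ) ≠ 0 := Complex.ofReal_ne_zero.2 hx
  have hsum := ((summable_natCast_mul_pow_pred_div hd (lam * x)).hasSum.mul_left lam).add
    (((hasSum_Emu hμ (lam * x)).sub (hasSum_Emu hμ (lam * -x))).mul_left ((μ : ℂ) / x))
  have hval := hsum.unique <|
    ((hasSum_dIdx_mul_pow_pred_div_dFact hμ (lam * x)).mul_left lam).congr_fun fun n => by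
      linear_combination (1 / (dFact μ n : ℂ)) * dunkl_pow_identity lam x hx' n
  rw [dunklC, hderiv.deriv, ← hval]
  push_cast
  ring

end Dunkl

/-- `τ_y E_μ(λx) = E_μ(λx) E_μ(λy)`. -/
theorem tau_Emu (μ : ℝ) (hμ : 0 ≤ μ) (lam : ℂ) (x y : ℝ) (hx : x ≠ 0) :
    tauC μ y (fun t : ℝ => Emu μ (lam * t)) x = Emu μ (lam * x) * Emu μ (lam * y) := by
  have hterm (n : ℕ) : (y : ℂ) ^ n / (dFact μ n : ℂ) * (dunklC μ)^[n] (fun t => Emu μ (lam * t)) x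
      = Emu μ (lam * x) * ((lam * y) ^ n / (dFact μ n : ℂ)) := by
    rw [dunklC_iterate_apply_of_eigen (fun t ht => dunklC_Emu_comp_mul hμ lam ht) n hx, mul_pow]
    ring
  rw [tauC, tsum_congr hterm, tsum_mul_left]
  rfl
end
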